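/- Let D(r,s) be the covariance double contour integral (see context). For every integer r ≥ 2 one has D(r−1,r) − D(r,r−1) = 1/(r−1). -/

import Mathlib

open MeasureTheory Filter Finset

/-- The covariance double contour integral `D(r,s)` of slowed `t`-TASEP:
`D(r,s) = (1/(4π²)) ∮_{|z|=R} ∮_{|w|=ρ} (w/(z−w)) (r!s!/(z^r w^s)) e^{z+w} (1−z/r)(1−w/s) (dz/z)(dw/w)`,
with both circles centered at the origin, traversed counterclockwise, and the inner
integral in `w` performed first. -/
noncomputable def covD (r s : ℕ) (R ρ : ℝ) : ℂ :=
  (1 / (4 * (Real.pi : ℂ) ^ 2)) *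
    ∮ z in C(0, R),
      (∮ w in C(0, ρ),
        w / (z - w) * ((r.factorial : ℂ) * (s.factorial : ℂ) / (z ^ r * w ^ s)) *
          Complex.exp (z + w) * (1 - z / (r : ℂ)) * (1 - w / (s : ℂ)) / w) / z

/-!
For `‖z‖ > ρ` partial fractions split `1 / (w ^ s * (z - w))` into `1 / (z ^ s * (z - w))`, which is
holomorphic on the `w`-disc and integrates to zero, and `∑_{j<s} z^{j-s} w^{-j-1}`, whose
integrals against `e^w (1 - w/s)` give, by Cauchy's formula, its Taylor coefficients
`(1 - j/s) / j!`. Treating the outer integral the same way gives the closed form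
`D(r,s) = r! s! / (r s (r+s)!) · ∑_{j<s} (s-j)² C(r+s, j)`.
For `(r,s) = (p, p+1)` and `(p+1, p)` the two sums differ by
`∑_{j<p} (2p+1-2j) C(2p+1, j) + C(2p+1, p)`, and since `(N-j) C(N,j) = (j+1) C(N,j+1)` the sum
telescopes to `p C(2p+1, p)`; what remains is `1/p`.
-/

open Complex Metric
open scoped Real Nat

theorem iteratedDeriv_exp_mul_one_sub_div (a : ℂ) (n : ℕ) :
    iteratedDeriv n (fun z => exp z * (1 - z / a)) = fun z => exp z * (1 - (z + n) / a) := by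
  induction n with
  | zero => simp
  | succ n ih =>
    rw [iteratedDeriv_succ, ih]
    ext z
    have h : HasDerivAt (fun z => exp z * (1 - (z + n) / a))
        (exp z * (1 - (z + n) / a) + exp z * (-(1 / a))) z := by
      refine (hasDerivAt_exp z).mul ?_
      simpa using ((hasDerivAt_id z).add_const (n : ℂ)).div_const a |>.const_sub 1
    rw [h.deriv]
    push_cast
    ring

theorem one_div_pow_mul_sub_eq_add_sum {z w : ℂ} (hz : z ≠ 0) (hw : w ≠ 0) (hzw : z - w ≠ 0)
    (s : ℕ) :
    1 / (w ^ s * (z - w)) =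
      1 / (z ^ s * (z - w)) + ∑ j ∈ range s, 1 / (z ^ (s - j) * w ^ (j + 1)) := by
  induction s with
  | zero => simp
  | succ s ih =>
    have hshift : ∑ j ∈ range s, 1 / (z ^ (s + 1 - j) * w ^ (j + 1)) =
        z⁻¹ * ∑ j ∈ range s, 1 / (z ^ (s - j) * w ^ (j + 1)) := by
      rw [mul_sum]
      refine sum_congr rfl fun j hj => ?_
      rw [Nat.succ_sub (mem_range.mp hj).le, pow_succ]
      field_simp
    rw [sum_range_succ, hshift, ← add_sub_cancel_left (1 / (z ^ s * (z - w))) (∑ j ∈ range s, _),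
      ← ih, Nat.add_sub_cancel_left]
    field_simp
    ring

theorem circleIntegral_div_pow_mul_sub {g : ℂ → ℂ} {ρ : ℝ} (hρ : 0 < ρ)
    (hg : DifferentiableOn ℂ g (closedBall 0 ρ)) (s : ℕ) {z : ℂ} (hz : ρ < ‖z‖) :
    (∮ w in C(0, ρ), g w / (w ^ s * (z - w))) =
      2 * π * I * ∑ j ∈ range s, iteratedDeriv j g 0 / (j ! * z ^ (s - j)) := by
  have hz0 : z ≠ 0 := norm_pos_iff.mp (hρ.trans hz)
  have hzw : ∀ w ∈ closedBall (0 : ℂ) ρ, z - w ≠ 0 := fun w hw h => by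
    rw [mem_closedBall_zero_iff, ← sub_eq_zero.mp h] at hw
    linarith
  have hcauchy : (∮ w in C(0, ρ), g w / (z - w)) = 0 :=
    ((hg.div (differentiableOn_const z |>.sub differentiableOn_id) hzw).mono
      closure_ball_subset_closedBall).diffContOnCl.circleIntegral_eq_zero hρ.le
  have hg' : ContinuousOn g (sphere 0 ρ) := hg.continuousOn.mono sphere_subset_closedBall
  have hint₀ (c : ℂ) : CircleIntegrable (fun w => c * (g w / (z - w))) 0 ρ :=
    (continuousOn_const.mul <| hg'.div (continuousOn_const.sub continuousOn_id) fun w hw =>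
      hzw w (sphere_subset_closedBall hw)).circleIntegrable hρ.le
  have hint (c : ℂ) (j : ℕ) : CircleIntegrable (fun w => c * (1 / w ^ (j + 1) * g w)) 0 ρ :=
    (continuousOn_const.mul <| (continuousOn_const.div (continuousOn_id.pow _) fun w hw =>
      pow_ne_zero _ (ne_of_mem_sphere hw hρ.ne')).mul hg').circleIntegrable hρ.le
  calc (∮ w in C(0, ρ), g w / (w ^ s * (z - w)))
      = ∮ w in C(0, ρ), 1 / z ^ s * (g w / (z - w)) +
          ∑ j ∈ range s, 1 / z ^ (s - j) * (1 / w ^ (j + 1) * g w) := by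
        refine circleIntegral.integral_congr hρ.le fun w hw => ?_
        have hw0 : w ≠ 0 := ne_of_mem_sphere hw hρ.ne'
        rw [div_eq_mul_one_div,
          one_div_pow_mul_sub_eq_add_sum hz0 hw0 (hzw w (sphere_subset_closedBall hw)),
          mul_add, mul_sum]
        congr 1
        · field_simp
        · exact sum_congr rfl fun j _ => by field_simp
    _ = ∑ j ∈ range s, 1 / z ^ (s - j) * ∮ w in C(0, ρ), 1 / w ^ (j + 1) * g w := by
        have hsum : CircleIntegrable
            (fun w => ∑ j ∈ range s, 1 / z ^ (s - j) * (1 / w ^ (j + 1) * g w)) 0 ρ := by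
          simpa only [Finset.sum_fn] using CircleIntegrable.sum (range s) fun j _ => hint _ j
        rw [circleIntegral.integral_add (hint₀ _) hsum,
          circleIntegral.integral_const_mul, hcauchy, mul_zero, zero_add,
          circleIntegral.integral_fun_sum fun j _ => hint _ j]
        simp only [circleIntegral.integral_const_mul]
    _ = 2 * π * I * ∑ j ∈ range s, iteratedDeriv j g 0 / (j ! * z ^ (s - j)) := by
        rw [mul_sum]
        refine sum_congr rfl fun j _ => ?_
        have := hg.circleIntegral_one_div_sub_center_pow_smul hρ j
        simp only [sub_zero, smul_eq_mul] at this
        rw [this]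
        field_simp

theorem circleIntegral_one_div_pow_mul_exp_mul_one_sub_div (a : ℂ) {R : ℝ} (hR : 0 < R) (n : ℕ) :
    (∮ z in C(0, R), 1 / z ^ (n + 1) * (exp z * (1 - z / a))) =
      2 * π * I * ((1 - n / a) / n !) := by
  have h := (by fun_prop : Differentiable ℂ fun z => exp z * (1 - z / a)).differentiableOn
    |>.circleIntegral_one_div_sub_center_pow_smul (c := 0) hR n
  simp only [sub_zero, smul_eq_mul, iteratedDeriv_exp_mul_one_sub_div, exp_zero, zero_add,
    one_mul] at h
  rw [h]
  ring

theorem circleIntegral_exp_mul_one_sub_div_div_pow_mul_sub (a : ℂ) {ρ : ℝ} (hρ : 0 < ρ) (s : ℕ)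
    {z : ℂ} (hz : ρ < ‖z‖) :
    (∮ w in C(0, ρ), exp w * (1 - w / a) / (w ^ s * (z - w))) =
      2 * π * I * ∑ j ∈ range s, (1 - j / a) / (j ! * z ^ (s - j)) := by
  rw [circleIntegral_div_pow_mul_sub hρ
    (by fun_prop : Differentiable ℂ fun w => exp w * (1 - w / a)).differentiableOn s hz]
  simp only [iteratedDeriv_exp_mul_one_sub_div, exp_zero, zero_add, one_mul]

theorem covD_inner_integral_div (r s : ℕ) {ρ : ℝ} (hρ : 0 < ρ) {z : ℂ} (hz : ρ < ‖z‖) :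
    (∮ w in C(0, ρ), w / (z - w) * ((r ! : ℂ) * (s ! : ℂ) / (z ^ r * w ^ s)) *
        exp (z + w) * (1 - z / (r : ℂ)) * (1 - w / (s : ℂ)) / w) / z =
      ∑ j ∈ range s, 2 * π * I * r ! * s ! * ((1 - j / s) / j !) *
        (1 / z ^ ((r + s - j : ℕ) + 1) * (exp z * (1 - z / r))) := by
  have hz0 : z ≠ 0 := norm_pos_iff.mp (hρ.trans hz)
  have hsplit : (∮ w in C(0, ρ), w / (z - w) * ((r ! : ℂ) * (s ! : ℂ) / (z ^ r * w ^ s)) *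
        exp (z + w) * (1 - z / (r : ℂ)) * (1 - w / (s : ℂ)) / w) =
      ∮ w in C(0, ρ), r ! * s ! * exp z * (1 - z / r) / z ^ r *
        (exp w * (1 - w / s) / (w ^ s * (z - w))) := by
    refine circleIntegral.integral_congr hρ.le fun w hw => ?_
    have hw0 : w ≠ 0 := ne_of_mem_sphere hw hρ.ne'
    simp only [exp_add]
    field_simp
  rw [hsplit, circleIntegral.integral_const_mul,
    circleIntegral_exp_mul_one_sub_div_div_pow_mul_sub _ hρ s hz, mul_sum, mul_sum, sum_div]
  refine sum_congr rfl fun j hj => ?_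
  rw [Nat.add_sub_assoc (mem_range.mp hj).le, pow_succ, pow_add]
  field_simp

theorem covD_eq_neg_sum (r s : ℕ) {R ρ : ℝ} (hρ : 0 < ρ) (hρR : ρ < R) :
    covD r s R ρ = -(r ! * s ! : ℂ) *
      ∑ j ∈ range s, (1 - (j : ℂ) / s) / j ! * ((1 - ((r + s - j : ℕ) : ℂ) / r) / (r + s - j) !) := by
  have hR : 0 < R := hρ.trans hρR
  have hint (c : ℂ) (n : ℕ) :
      CircleIntegrable (fun z => c * (1 / z ^ (n + 1) * (exp z * (1 - z / r)))) 0 R :=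
    (continuousOn_const.mul <| (continuousOn_const.div (continuousOn_id.pow _) fun z hz =>
      pow_ne_zero _ (ne_of_mem_sphere hz hR.ne')).mul (by fun_prop)).circleIntegrable hR.le
  have hπ : (π : ℂ) ≠ 0 := ofReal_ne_zero.mpr Real.pi_ne_zero
  rw [covD, circleIntegral.integral_congr hR.le fun z hz => covD_inner_integral_div r s hρ
      (by rwa [mem_sphere_zero_iff_norm.mp hz]),
    circleIntegral.integral_fun_sum fun j _ => hint _ _, mul_sum, mul_sum]
  refine sum_congr rfl fun j _ => ?_
  rw [circleIntegral.integral_const_mul, circleIntegral_one_div_pow_mul_exp_mul_one_sub_div _ hR]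
  field_simp
  ring_nf
  rw [I_sq]
  ring

theorem covD_eq_sum_choose {r s : ℕ} (hr : r ≠ 0) (hs : s ≠ 0) {R ρ : ℝ} (hρ : 0 < ρ)
    (hρR : ρ < R) :
    covD r s R ρ = r ! * s ! / (r * s * (r + s) !) *
      ∑ j ∈ range s, ((s : ℂ) - j) ^ 2 * (r + s).choose j := by
  rw [covD_eq_neg_sum r s hρ hρR, mul_sum, mul_sum]
  refine sum_congr rfl fun j hj => ?_
  have hj : j ≤ r + s := (mem_range.mp hj).le.trans (Nat.le_add_left s r)
  have hN : ((r + s) ! : ℂ) ≠ 0 := Nat.cast_ne_zero.mpr (Nat.factorial_ne_zero _)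
  have hr' : (r : ℂ) ≠ 0 := Nat.cast_ne_zero.mpr hr
  have hs' : (s : ℂ) ≠ 0 := Nat.cast_ne_zero.mpr hs
  rw [Nat.cast_choose ℂ hj, Nat.cast_sub hj]
  push_cast
  field_simp
  ring

theorem sum_range_choose_mul_sub_two_mul (N m : ℕ) :
    ∑ j ∈ range m, (N.choose j : ℤ) * (N - 2 * j) = m * N.choose m := by
  induction m with
  | zero => simp
  | succ m ih =>
    rw [sum_range_succ, ih]
    rcases le_or_gt m N with hmN | hNm
    · have h := congrArg (Nat.cast : ℕ → ℤ) (Nat.choose_succ_right_eq N m)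
      push_cast [Nat.cast_sub hmN] at h ⊢
      linear_combination -h
    · simp [Nat.choose_eq_zero_of_lt hNm, Nat.choose_eq_zero_of_lt (hNm.trans m.lt_succ_self)]

theorem sum_sq_mul_choose_succ_sub (p : ℕ) :
    ∑ j ∈ range (p + 1), ((p : ℤ) + 1 - j) ^ 2 * (2 * p + 1).choose j -
      ∑ j ∈ range p, ((p : ℤ) - j) ^ 2 * (2 * p + 1).choose j =
        (p + 1) * (2 * p + 1).choose p := by
  rw [sum_range_succ, add_sub_right_comm, ← sum_sub_distrib,
    sum_congr rfl fun j _ => show ((p : ℤ) + 1 - j) ^ 2 * (2 * p + 1).choose j -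
      ((p : ℤ) - j) ^ 2 * (2 * p + 1).choose j =
        ((2 * p + 1).choose j : ℤ) * ((2 * p + 1 : ℕ) - 2 * j) by push_cast; ring,
    sum_range_choose_mul_sub_two_mul]
  ring

/-- For every integer `r ≥ 2`, `D(r−1,r) − D(r,r−1) = 1/(r−1)`. -/
theorem covD_antisym (r : ℕ) (hr : 2 ≤ r) (ρ R : ℝ) (hρ : 0 < ρ) (hρR : ρ < R) :
    covD (r - 1) r R ρ - covD r (r - 1) R ρ = 1 / ((r : ℂ) - 1) := by
  obtain ⟨p, rfl⟩ : ∃ p, r = p + 1 := ⟨r - 1, by omega⟩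
  have hp : p ≠ 0 := by omega
  rw [Nat.add_sub_cancel, covD_eq_sum_choose hp (by omega) hρ hρR,
    covD_eq_sum_choose (by omega) hp hρ hρR, show p + (p + 1) = 2 * p + 1 by ring,
    show p + 1 + p = 2 * p + 1 by ring]
  have hsum := congrArg (Int.cast : ℤ → ℂ) (sum_sq_mul_choose_succ_sub p)
  have hchoose := congrArg (Nat.cast : ℕ → ℂ)
    (Nat.choose_mul_factorial_mul_factorial (by omega : p ≤ 2 * p + 1))
  rw [show 2 * p + 1 - p = p + 1 by omega] at hchoose
  push_cast at hsum hchoose ⊢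
  rw [add_sub_cancel_right]
  have hp' : (p : ℂ) ≠ 0 := Nat.cast_ne_zero.mpr hp
  have hN : ((2 * p + 1) ! : ℂ) ≠ 0 := Nat.cast_ne_zero.mpr (Nat.factorial_ne_zero _)
  linear_combination (norm := skip)
    (p ! * (p + 1) ! / (p * (p + 1) * (2 * p + 1) !) : ℂ) * hsum +
      1 / (p * (2 * p + 1) !) * hchoose
  field_simp
  ring
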